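/- Let $(X,d)$ be a metric space, $p \in [1,\infty)$, $\delta > 0$, and let $\sigma : [0,\infty) \to X$ be a curve such that the function $u(t) := d(\sigma(t), \sigma(0))$ is locally absolutely continuous with $|\dot u(t)| \le g(t)$ a.e. for a measurable function $g \ge 0$ satisfying $d(\sigma(s),\sigma(t)) \le \int_s^t g(r)\,dr$ for all $0 \le s \le t$. Then $\left(\int_0^\infty e^{-\delta t} d(\sigma(t),\sigma(0))^p \, dt\right)^{1/p} \le \frac{p}{\delta} \left(\int_0^\infty e^{-\delta t} g(t)^p \, dt\right)^{1/p}$. -/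

import Mathlib

/-!
Since `d(σ t, σ 0) ≤ ∫₀ᵗ g`, it suffices to prove the weighted Hardy inequality
`∫₀^∞ e^{-δt} (∫₀ᵗ f)^p dt ≤ (p/δ)^p ∫₀^∞ e^{-δt} f^p`. With `b = δ/p`, Hölder's inequality
against the weight `e^{br}` gives `(∫₀ᵗ f)^p ≤ (e^{bt}/b)^{p-1} ∫₀ᵗ e^{-(p-1)br} f(r)^p dr`.
Multiplied by `e^{-δt} = e^{-pbt}` this leaves the kernel `e^{-bt}`, and exchanging the order of
integration turns `∫_r^∞ e^{-bt} dt = e^{-br}/b` into the last factor `1/b`. Working in `ℝ≥0∞`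
makes every step free of integrability conditions.
-/

open MeasureTheory Set Real
open scoped ENNReal

theorem lintegral_rpow_le_lintegral_rpow_div_mul {α : Type*} [MeasurableSpace α] {μ : Measure α}
    {p : ℝ} (hp : 1 ≤ p) {f w : α → ℝ≥0∞} (hf : AEMeasurable f μ) (hw : AEMeasurable w μ)
    (hw0 : ∀ x, w x ≠ 0) (hw_top : ∀ x, w x ≠ ∞) :
    (∫⁻ x, f x ∂μ) ^ p ≤ (∫⁻ x, f x ^ p / w x ^ (p - 1) ∂μ) * (∫⁻ x, w x ∂μ) ^ (p - 1) := by
  rcases hp.eq_or_lt with rfl | hp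
  · simp
  set q := p.conjExponent
  have hpq : p.HolderConjugate q := .conjExponent hp
  have hq : 0 < 1 / q := hpq.symm.one_div_pos
  have hsplit : ∀ x, f x = (f x / w x ^ (1 / q)) * w x ^ (1 / q) := fun x =>
    (ENNReal.div_mul_cancel (ENNReal.rpow_pos (pos_iff_ne_zero.2 (hw0 x)) (hw_top x)).ne'
      (ENNReal.rpow_ne_top_of_nonneg hq.le (hw_top x))).symm
  have hpow₁ : ∀ x, (f x / w x ^ (1 / q)) ^ p = f x ^ p / w x ^ (p - 1) := fun x => by
    rw [ENNReal.div_rpow_of_nonneg _ _ hpq.pos.le, ← ENNReal.rpow_mul, one_div_mul_eq_div,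
      hpq.div_conj_eq_sub_one]
  have hpow₂ : ∀ x, (w x ^ (1 / q)) ^ q = w x := fun x => by
    rw [← ENNReal.rpow_mul, one_div_mul_cancel hpq.symm.ne_zero, ENNReal.rpow_one]
  have holder := ENNReal.lintegral_mul_le_Lp_mul_Lq μ hpq (f := fun x => f x / w x ^ (1 / q))
    (g := fun x => w x ^ (1 / q)) (hf.div (hw.pow_const _)) (hw.pow_const _)
  simp only [Pi.mul_apply, ← hsplit, hpow₁, hpow₂] at holder
  calc (∫⁻ x, f x ∂μ) ^ p
      ≤ ((∫⁻ x, f x ^ p / w x ^ (p - 1) ∂μ) ^ (1 / p) * (∫⁻ x, w x ∂μ) ^ (1 / q)) ^ p :=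
        ENNReal.rpow_le_rpow holder hpq.pos.le
    _ = (∫⁻ x, f x ^ p / w x ^ (p - 1) ∂μ) * (∫⁻ x, w x ∂μ) ^ (p - 1) := by
        rw [ENNReal.mul_rpow_of_nonneg _ _ hpq.pos.le, ← ENNReal.rpow_mul, ← ENNReal.rpow_mul,
          one_div_mul_cancel hpq.ne_zero, ENNReal.rpow_one, one_div_mul_eq_div,
          hpq.div_conj_eq_sub_one]

theorem ofReal_integral_le_lintegral_ofReal {α : Type*} [MeasurableSpace α] {μ : Measure α}
    {f : α → ℝ} (hf : ∀ x, 0 ≤ f x) :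
    ENNReal.ofReal (∫ x, f x ∂μ) ≤ ∫⁻ x, ENNReal.ofReal (f x) ∂μ :=
  calc ENNReal.ofReal (∫ x, f x ∂μ) ≤ ‖∫ x, f x ∂μ‖ₑ := Real.ofReal_le_enorm _
    _ ≤ ∫⁻ x, ‖f x‖ₑ ∂μ := enorm_integral_le_lintegral_enorm f
    _ = ∫⁻ x, ENNReal.ofReal (f x) ∂μ := by simp only [Real.enorm_of_nonneg (hf _)]

theorem lintegral_Ioi_ofReal_exp_mul {a : ℝ} (ha : a < 0) (c : ℝ) :
    ∫⁻ x in Ioi c, ENNReal.ofReal (exp (a * x)) = ENNReal.ofReal (-exp (a * c) / a) := by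
  rw [← integral_exp_mul_Ioi ha,
    ofReal_integral_eq_lintegral_ofReal (integrableOn_exp_mul_Ioi ha c)
      (ae_of_all _ fun _ => (exp_pos _).le)]

theorem lintegral_Iic_ofReal_exp_mul {a : ℝ} (ha : 0 < a) (c : ℝ) :
    ∫⁻ x in Iic c, ENNReal.ofReal (exp (a * x)) = ENNReal.ofReal (exp (a * c) / a) := by
  rw [← integral_exp_mul_Iic ha,
    ofReal_integral_eq_lintegral_ofReal (integrableOn_exp_mul_Iic ha c)
      (ae_of_all _ fun _ => (exp_pos _).le)]

theorem lintegral_Ioi_mul_lintegral_Ioc (a : ℝ) {w h : ℝ → ℝ≥0∞} (hw : Measurable w)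
    (hh : Measurable h) :
    ∫⁻ t in Ioi a, w t * ∫⁻ r in Ioc a t, h r = ∫⁻ r in Ioi a, (∫⁻ t in Ici r, w t) * h r := by
  have hinner : ∀ t, w t * ∫⁻ r in Ioc a t, h r =
      ∫⁻ r in Ioi a, if r ≤ t then w t * h r else 0 := fun t => by
    have hite : ∀ r, (if r ≤ t then w t * h r else 0) = w t * (Iic t).indicator h r := fun r => by
      by_cases hrt : r ≤ t <;> simp [hrt]
    rw [lintegral_congr hite, lintegral_const_mul _ (hh.indicator measurableSet_Iic),
      lintegral_indicator measurableSet_Iic, Measure.restrict_restrict measurableSet_Iic,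
      inter_comm, Ioi_inter_Iic]
  have hmeas : Measurable (Function.uncurry fun t r : ℝ => if r ≤ t then w t * h r else 0) :=
    Measurable.ite (measurableSet_le measurable_snd measurable_fst)
      ((hw.comp measurable_fst).mul (hh.comp measurable_snd)) measurable_const
  have houter : ∀ r ∈ Ioi a, ∫⁻ t in Ioi a, (if r ≤ t then w t * h r else 0) =
      (∫⁻ t in Ici r, w t) * h r := fun r hr => by
    have hite : ∀ t, (if r ≤ t then w t * h r else 0) = (Ici r).indicator w t * h r := fun t => by
      by_cases hrt : r ≤ t <;> simp [hrt]
    rw [lintegral_congr hite, lintegral_mul_const _ (hw.indicator measurableSet_Ici),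
      lintegral_indicator measurableSet_Ici, Measure.restrict_restrict measurableSet_Ici,
      inter_eq_left.2 (Ici_subset_Ioi.2 hr)]
  simp_rw [hinner]
  rw [lintegral_lintegral_swap hmeas.aemeasurable]
  exact setLIntegral_congr_fun measurableSet_Ioi houter

theorem ofReal_exp_mul_rpow_lintegral_Ioc_le {p b : ℝ} (hp : 1 ≤ p) (hb : 0 < b)
    {f : ℝ → ℝ≥0∞} (hf : Measurable f) (a t : ℝ) :
    ENNReal.ofReal (exp (-(p * b) * t)) * (∫⁻ r in Ioc a t, f r) ^ p ≤
      ENNReal.ofReal b⁻¹ ^ (p - 1) * (ENNReal.ofReal (exp (-b * t)) *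
        ∫⁻ r in Ioc a t, f r ^ p / ENNReal.ofReal (exp (b * r)) ^ (p - 1)) := by
  have hp1 : 0 ≤ p - 1 := sub_nonneg.2 hp
  have hweight :
      ∫⁻ r in Ioc a t, ENNReal.ofReal (exp (b * r)) ≤ ENNReal.ofReal (exp (b * t) / b) :=
    (lintegral_Iic_ofReal_exp_mul hb t).symm ▸ lintegral_mono_set Ioc_subset_Iic_self
  have hexp : ENNReal.ofReal (exp (-(p * b) * t)) * ENNReal.ofReal (exp (b * t) / b) ^ (p - 1) =
      ENNReal.ofReal b⁻¹ ^ (p - 1) * ENNReal.ofReal (exp (-b * t)) := by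
    rw [ENNReal.ofReal_rpow_of_nonneg (by positivity) hp1,
      ENNReal.ofReal_rpow_of_nonneg (by positivity) hp1, ← ENNReal.ofReal_mul (by positivity),
      ← ENNReal.ofReal_mul (by positivity), div_rpow (exp_pos _).le hb.le, inv_rpow hb.le,
      ← exp_mul]
    congr 1
    field_simp
    rw [← exp_add]
    ring_nf
  calc ENNReal.ofReal (exp (-(p * b) * t)) * (∫⁻ r in Ioc a t, f r) ^ p
      ≤ ENNReal.ofReal (exp (-(p * b) * t)) *
          ((∫⁻ r in Ioc a t, f r ^ p / ENNReal.ofReal (exp (b * r)) ^ (p - 1)) *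
            ENNReal.ofReal (exp (b * t) / b) ^ (p - 1)) := by
        gcongr
        refine (lintegral_rpow_le_lintegral_rpow_div_mul hp hf.aemeasurable
          (w := fun r => ENNReal.ofReal (exp (b * r))) (by fun_prop)
          (fun _ => (ENNReal.ofReal_pos.2 (exp_pos _)).ne')
          (fun _ => ENNReal.ofReal_ne_top)).trans ?_
        gcongr
    _ = _ := by rw [mul_comm (∫⁻ _ in _, _), ← mul_assoc, hexp, mul_assoc]

theorem lintegral_exp_mul_rpow_lintegral_Ioc_le {p δ : ℝ} (hp : 1 ≤ p) (hδ : 0 < δ)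
    {f : ℝ → ℝ≥0∞} (hf : Measurable f) :
    ∫⁻ t in Ioi 0, ENNReal.ofReal (exp (-δ * t)) * (∫⁻ r in Ioc 0 t, f r) ^ p ≤
      ENNReal.ofReal (p / δ) ^ p * ∫⁻ t in Ioi 0, ENNReal.ofReal (exp (-δ * t)) * f t ^ p := by
  set b := δ / p
  have hp0 : 0 < p := zero_lt_one.trans_le hp
  have hp1 : 0 ≤ p - 1 := sub_nonneg.2 hp
  have hb : 0 < b := div_pos hδ hp0
  have hδb : δ = p * b := (mul_div_cancel₀ δ hp0.ne').symm
  set h : ℝ → ℝ≥0∞ := fun r => f r ^ p / ENNReal.ofReal (exp (b * r)) ^ (p - 1)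
  have hh : Measurable h := by fun_prop
  have hkernel : ∀ r, ∫⁻ t in Ici r, ENNReal.ofReal (exp (-b * t)) =
      ENNReal.ofReal (exp (-b * r) / b) := fun r => by
    rw [← restrict_Ioi_eq_restrict_Ici, lintegral_Ioi_ofReal_exp_mul (neg_lt_zero.2 hb),
      neg_div_neg_eq]
  have hexp : ∀ r, ENNReal.ofReal (exp (-b * r) / b) * h r =
      ENNReal.ofReal b⁻¹ * (ENNReal.ofReal (exp (-δ * r)) * f r ^ p) := fun r => by
    simp only [h]
    rw [ENNReal.ofReal_rpow_of_pos (exp_pos _), ← exp_mul, div_eq_mul_inv (f r ^ p),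
      ← ENNReal.ofReal_inv_of_pos (exp_pos _), mul_left_comm,
      ← ENNReal.ofReal_mul (by positivity), mul_comm (f r ^ p), ← mul_assoc,
      ← ENNReal.ofReal_mul (by positivity)]
    congr 2
    rw [← exp_neg, div_mul_eq_mul_div, ← exp_add, hδb]
    field_simp
    ring_nf
  calc ∫⁻ t in Ioi 0, ENNReal.ofReal (exp (-δ * t)) * (∫⁻ r in Ioc 0 t, f r) ^ p
      ≤ ∫⁻ t in Ioi 0, ENNReal.ofReal b⁻¹ ^ (p - 1) *
          (ENNReal.ofReal (exp (-b * t)) * ∫⁻ r in Ioc 0 t, h r) := by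
        refine lintegral_mono fun t => ?_
        rw [hδb]
        exact ofReal_exp_mul_rpow_lintegral_Ioc_le hp hb hf 0 t
    _ = ENNReal.ofReal b⁻¹ ^ (p - 1) *
          ∫⁻ r in Ioi 0, ENNReal.ofReal (exp (-b * r) / b) * h r := by
        rw [lintegral_const_mul' _ _ (ENNReal.rpow_ne_top_of_nonneg hp1 ENNReal.ofReal_ne_top),
          lintegral_Ioi_mul_lintegral_Ioc 0 (by fun_prop) hh]
        simp_rw [hkernel]
    _ = ENNReal.ofReal (p / δ) ^ p * ∫⁻ t in Ioi 0, ENNReal.ofReal (exp (-δ * t)) * f t ^ p := by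
        simp_rw [hexp]
        rw [lintegral_const_mul' _ _ ENNReal.ofReal_ne_top, ← mul_assoc,
          ← ENNReal.rpow_one (ENNReal.ofReal b⁻¹), ← ENNReal.rpow_mul, one_mul,
          ← ENNReal.rpow_add_of_nonneg _ _ hp1 zero_le_one, sub_add_cancel, inv_div]

theorem weighted_poincare_metric_general {X : Type*} [MetricSpace X] (p δ : ℝ)
    (hp : 1 ≤ p) (hδ : 0 < δ)
    (σ : ℝ → X) (g : ℝ → ℝ) (hgm : Measurable g) (hg0 : ∀ t, 0 ≤ g t)
    (hcurve : ∀ s t : ℝ, 0 ≤ s → s ≤ t → dist (σ s) (σ t) ≤ ∫ r in s..t, g r) :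
    (∫⁻ t in Set.Ioi (0:ℝ), ENNReal.ofReal (Real.exp (-δ * t) * dist (σ t) (σ 0) ^ p)) ^ (1/p)
      ≤ ENNReal.ofReal (p / δ) *
        (∫⁻ t in Set.Ioi (0:ℝ), ENNReal.ofReal (Real.exp (-δ * t) * g t ^ p)) ^ (1/p) := by
  have hp0 : 0 < p := zero_lt_one.trans_le hp
  have hdist : ∀ t ∈ Ioi (0 : ℝ), ENNReal.ofReal (exp (-δ * t) * dist (σ t) (σ 0) ^ p) ≤
      ENNReal.ofReal (exp (-δ * t)) * (∫⁻ r in Ioc 0 t, ENNReal.ofReal (g r)) ^ p := fun t ht => by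
    have hcurve₀ : dist (σ t) (σ 0) ≤ ∫ r in Ioc 0 t, g r := by
      rw [dist_comm, ← intervalIntegral.integral_of_le (le_of_lt ht)]
      exact hcurve 0 t le_rfl (le_of_lt ht)
    rw [ENNReal.ofReal_mul (exp_pos _).le, ← ENNReal.ofReal_rpow_of_nonneg dist_nonneg hp0.le]
    gcongr
    exact (ENNReal.ofReal_le_ofReal hcurve₀).trans (ofReal_integral_le_lintegral_ofReal hg0)
  have hspeed : ∀ t, ENNReal.ofReal (exp (-δ * t)) * ENNReal.ofReal (g t) ^ p =
      ENNReal.ofReal (exp (-δ * t) * g t ^ p) := fun t => by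
    rw [ENNReal.ofReal_rpow_of_nonneg (hg0 t) hp0.le, ENNReal.ofReal_mul (exp_pos _).le]
  have hpower : ∫⁻ t in Ioi 0, ENNReal.ofReal (exp (-δ * t) * dist (σ t) (σ 0) ^ p) ≤
      ENNReal.ofReal (p / δ) ^ p * ∫⁻ t in Ioi 0, ENNReal.ofReal (exp (-δ * t) * g t ^ p) :=
    calc _ ≤ ∫⁻ t in Ioi 0, ENNReal.ofReal (exp (-δ * t)) *
            (∫⁻ r in Ioc 0 t, ENNReal.ofReal (g r)) ^ p :=
          setLIntegral_mono' measurableSet_Ioi hdist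
      _ ≤ _ := lintegral_exp_mul_rpow_lintegral_Ioc_le hp hδ (by fun_prop)
      _ = _ := by simp_rw [hspeed]
  calc _ ≤ (ENNReal.ofReal (p / δ) ^ p *
          ∫⁻ t in Ioi 0, ENNReal.ofReal (exp (-δ * t) * g t ^ p)) ^ (1 / p) :=
        ENNReal.rpow_le_rpow hpower (by positivity)
    _ = _ := by
        rw [ENNReal.mul_rpow_of_nonneg _ _ (by positivity), one_div, ENNReal.rpow_rpow_inv hp0.ne']

/-- Metric-space weighted Poincaré inequality: if `σ : [0,∞) → X` is a curve in a metric
space whose increments are controlled by a nonnegative measurable speed `g` (so that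
`t ↦ d(σ t, σ 0)` is locally absolutely continuous with a.e. derivative bounded by `g`),
then the weighted `L^p` distance from the starting point is bounded by `p/δ` times the
weighted `L^p` norm of the speed. -/
theorem weighted_poincare_metric {X : Type*} [MetricSpace X] (p δ : ℝ)
    (hp : 1 ≤ p) (hδ : 0 < δ)
    (σ : ℝ → X) (g : ℝ → ℝ) (hgm : Measurable g) (hg0 : ∀ t, 0 ≤ g t)
    (hgi : ∀ s t : ℝ, 0 ≤ s → s ≤ t → IntervalIntegrable g volume s t)
    (hcurve : ∀ s t : ℝ, 0 ≤ s → s ≤ t → dist (σ s) (σ t) ≤ ∫ r in s..t, g r) :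
    (∫⁻ t in Set.Ioi (0:ℝ), ENNReal.ofReal (Real.exp (-δ * t) * dist (σ t) (σ 0) ^ p)) ^ (1/p)
      ≤ ENNReal.ofReal (p / δ) *
        (∫⁻ t in Set.Ioi (0:ℝ), ENNReal.ofReal (Real.exp (-δ * t) * g t ^ p)) ^ (1/p) :=
  weighted_poincare_metric_general p δ hp hδ σ g hgm hg0 hcurve
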